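/- There exists an absolute constant k₀ > 0 such that the following holds. Fix N ≥ 2, an N-ary tree V of depth L ≥ 1, and radially decaying weights with parameter ε ≤ k₀/N, and let E = E₁ ∪ E₂ be the associated set. Then E ⊂ [0,2) × [0,2), and E is Δ-separated, i.e., |x − y| ≥ Δ for all distinct x,y ∈ E. -/

import Mathlib

open MeasureTheory Set Metric
open scoped Classical

noncomputable section

abbrev Pt : Type := EuclideanSpace ℝ (Fin 2)

/-- The point `(a, b)` of the Euclidean plane. -/
def pt (a b : ℝ) : Pt := WithLp.toLp 2 ![a, b]

/-- `V` is an `N`-ary tree: a finite prefix-closed set of strings over the alphabet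
`{0, …, N−1}` containing the empty string (the root), in which every non-leaf node
has at least `2` (and, automatically, at most `N`) children. -/
def IsNaryTree (N : ℕ) (V : Finset (List ℕ)) : Prop :=
  [] ∈ V ∧
  (∀ v ∈ V, ∀ u : List ℕ, u <+: v → u ∈ V) ∧
  (∀ v ∈ V, ∀ i ∈ v, i < N) ∧
  (∀ v ∈ V, (∃ a : ℕ, v ++ [a] ∈ V) →
    2 ≤ ((Finset.range N).filter (fun a => v ++ [a] ∈ V)).card)

/-- `v` is a leaf of `V`. -/
def IsLeaf (V : Finset (List ℕ)) (v : List ℕ) : Prop :=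
  v ∈ V ∧ ∀ a : ℕ, v ++ [a] ∉ V

/-- The tree has depth at least one, i.e. the root is not a leaf. -/
def DepthAtLeastOne (V : Finset (List ℕ)) : Prop := ∃ a : ℕ, [a] ∈ V

/-- Radially decaying weights with parameter `ε` (with the convention `W ∅ = 1`). -/
def RadiallyDecaying (V : Finset (List ℕ)) (W : List ℕ → ℝ) (ε : ℝ) : Prop :=
  W [] = 1 ∧ (∀ v ∈ V, 0 < W v) ∧ ∀ v ∈ V, v ≠ [] → W v ≤ ε * W v.dropLast

/-- The map `Ψ(v) = ∑_{i=1}^{d(v)} W(π_{i−1}(v))·v_i/(N−1)`. -/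
def Psi (N : ℕ) (W : List ℕ → ℝ) (v : List ℕ) : ℝ :=
  ∑ i ∈ Finset.range v.length, W (v.take i) * (v.getD i 0 : ℝ) / ((N : ℝ) - 1)

/-- `Δ = min_{v ∈ ∂V} W_v`. -/
def Delta (V : Finset (List ℕ)) (W : List ℕ → ℝ) : ℝ :=
  sInf {w : ℝ | ∃ v, IsLeaf V v ∧ w = W v}

def E1set (Δ : ℝ) : Set Pt :=
  {x | (∃ n : ℤ, x 0 = (n : ℝ) * Δ) ∧ x 0 ∈ Ico (0 : ℝ) 2 ∧ x 1 = 0}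

def E2set (N : ℕ) (V : Finset (List ℕ)) (W : List ℕ → ℝ) : Set Pt :=
  {x | ∃ v, IsLeaf V v ∧ x = pt (Psi N W v) (W v)}

def Eset (N : ℕ) (V : Finset (List ℕ)) (W : List ℕ → ℝ) : Set Pt :=
  E1set (Delta V W) ∪ E2set N V W

/-- Bundle of standing hypotheses: `N ≥ 2`, `V` an `N`-ary tree, `0 < ε ≤ k₀/N`,
and radially decaying weights with parameter `ε`. -/
def TreeHyp (k₀ : ℝ) (N : ℕ) (V : Finset (List ℕ)) (W : List ℕ → ℝ) (ε : ℝ) : Prop :=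
  2 ≤ N ∧ IsNaryTree N V ∧ 0 < ε ∧ ε ≤ k₀ / N ∧ RadiallyDecaying V W ε

/-- Distance between two subsets of the plane. -/
def setDist (s t : Set Pt) : ℝ := sInf {d : ℝ | ∃ x ∈ s, ∃ y ∈ t, d = dist x y}

/-- A dyadic square arising from `Q⁰ = [−3,5)²` by `k` repeated bisections. -/
structure DSquare where
  k : ℕ
  i : ℕ
  j : ℕ
  hi : i < 2 ^ k
  hj : j < 2 ^ k

namespace DSquare

def side (Q : DSquare) : ℝ := 8 / 2 ^ Q.k

def x0 (Q : DSquare) : ℝ := -3 + Q.i * Q.side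

def y0 (Q : DSquare) : ℝ := -3 + Q.j * Q.side

/-- The (half-open) square itself, as a subset of the plane. -/
def set (Q : DSquare) : Set Pt :=
  {x | x 0 ∈ Ico Q.x0 (Q.x0 + Q.side) ∧ x 1 ∈ Ico Q.y0 (Q.y0 + Q.side)}

/-- The concentric dilate `λQ`. -/
def dil (Q : DSquare) (lam : ℝ) : Set Pt :=
  {x | |x 0 - (Q.x0 + Q.side / 2)| ≤ lam * Q.side / 2 ∧
       |x 1 - (Q.y0 + Q.side / 2)| ≤ lam * Q.side / 2}

/-- The dyadic ancestor of `Q` at generation `k' ≤ Q.k`. -/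
def anc (Q : DSquare) (k' : ℕ) (h : k' ≤ Q.k) : DSquare :=
  ⟨k', Q.i / 2 ^ (Q.k - k'), Q.j / 2 ^ (Q.k - k'), by
      have h2 : 0 < 2 ^ (Q.k - k') := pow_pos (by norm_num) _
      rw [Nat.div_lt_iff_lt_mul h2, ← pow_add, Nat.add_sub_cancel' h]
      exact Q.hi, by
      have h2 : 0 < 2 ^ (Q.k - k') := pow_pos (by norm_num) _
      rw [Nat.div_lt_iff_lt_mul h2, ← pow_add, Nat.add_sub_cancel' h]
      exact Q.hj⟩

end DSquare

def Q0set : Set Pt := {x | x 0 ∈ Ico (-3 : ℝ) 5 ∧ x 1 ∈ Ico (-3 : ℝ) 5}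

/-- `Q` belongs to the Whitney decomposition `𝒲` of `Q⁰` relative to `E`:
`3Q ∩ E` has at most one point, while `3Q'' ∩ E` has at least two points for every
proper dyadic ancestor `Q''` of `Q`. -/
def InWhitney (E : Set Pt) (Q : DSquare) : Prop :=
  (Q.dil 3 ∩ E).Subsingleton ∧
  ∀ k' : ℕ, ∀ h : k' < Q.k, ¬ ((Q.anc k' h.le).dil 3 ∩ E).Subsingleton

/-- `Q ↔ Q'`, i.e. `1.1Q ∩ 1.1Q' ≠ ∅`. -/
def Touch (Q Q' : DSquare) : Prop := (Q.dil 1.1 ∩ Q'.dil 1.1).Nonempty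

/-- `‖F‖_{L^{2,p}(Ω)}^p = ∫_Ω |∇²F|^p`. -/
def sobEnergy (p : ℝ) (Ω : Set Pt) (F : Pt → ℝ) : ℝ :=
  ∫ x in Ω, ‖iteratedFDeriv ℝ 2 F x‖ ^ p

/-- The seminorm `‖F‖_{L^{2,p}(Ω)}`. -/
def sobNorm (p : ℝ) (Ω : Set Pt) (F : Pt → ℝ) : ℝ := sobEnergy p Ω F ^ (1 / p)

/-- Membership in the homogeneous Sobolev space `L^{2,p}(ℝ²)` (we work with `C²`
representatives with finite seminorm). -/
def MemSob (p : ℝ) (F : Pt → ℝ) : Prop :=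
  ContDiff ℝ 2 F ∧ Integrable fun x => ‖iteratedFDeriv ℝ 2 F x‖ ^ p

/-- The trace seminorm `‖f‖_{L^{2,p}(E)}` of `f : E → ℝ`. -/
def traceSobNorm (p : ℝ) (E : Set Pt) (f : E → ℝ) : ℝ :=
  sInf {c : ℝ | ∃ F : Pt → ℝ, MemSob p F ∧ (∀ y : E, F y.1 = f y) ∧ c = sobNorm p univ F}

/-- `T` is a linear extension operator `L^{2,p}(E) → L^{2,p}(ℝ²)` with norm bound `M`. -/
def IsExtOpPlane (p : ℝ) (E : Set Pt) (M : ℝ) (T : (E → ℝ) →ₗ[ℝ] (Pt → ℝ)) : Prop :=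
  ∀ f : E → ℝ, (∃ F : Pt → ℝ, MemSob p F ∧ ∀ y : E, F y.1 = f y) →
    MemSob p (T f) ∧ (∀ y : E, T f y.1 = f y) ∧
      sobNorm p univ (T f) ≤ M * traceSobNorm p E f

/-- `‖Φ‖_{L^{1,p}(V)}^p = ∑_{v ∈ V₀} |Φ(v) − Φ(π(v))|^p W_v^{2−p}`. -/
def treeEnergy (p : ℝ) (V : Finset (List ℕ)) (W : List ℕ → ℝ) (Φ : List ℕ → ℝ) : ℝ :=
  ∑ v ∈ V.erase [], |Φ v - Φ v.dropLast| ^ p * W v ^ (2 - p)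

def treeNorm (p : ℝ) (V : Finset (List ℕ)) (W : List ℕ → ℝ) (Φ : List ℕ → ℝ) : ℝ :=
  treeEnergy p V W Φ ^ (1 / p)

/-- The type of leaves of `V`. -/
def Leaves (V : Finset (List ℕ)) : Type := {v : List ℕ // IsLeaf V v}

/-- The trace seminorm `‖φ‖_{L^{1,p}(∂V)}`. -/
def treeTraceNorm (p : ℝ) (V : Finset (List ℕ)) (W : List ℕ → ℝ) (φ : Leaves V → ℝ) : ℝ :=
  sInf {c : ℝ | ∃ Φ : List ℕ → ℝ, (∀ v : Leaves V, Φ v.1 = φ v) ∧ c = treeNorm p V W Φ}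

/-- `H` is a linear extension operator `L^{1,p}(∂V) → L^{1,p}(V)` with norm bound `M`. -/
def IsExtOpTree (p : ℝ) (V : Finset (List ℕ)) (W : List ℕ → ℝ) (M : ℝ)
    (H : (Leaves V → ℝ) →ₗ[ℝ] (List ℕ → ℝ)) : Prop :=
  ∀ φ : Leaves V → ℝ,
    (∀ v : Leaves V, H φ v.1 = φ v) ∧ treeNorm p V W (H φ) ≤ M * treeTraceNorm p V W φ

/-- Longest common prefix of two strings (the lowest common ancestor). -/
def lcp : List ℕ → List ℕ → List ℕ
  | a :: as, b :: bs => if a = b then a :: lcp as bs else []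
  | _, _ => []

/-- The cluster `C_v ⊆ E₂` associated to a vertex `v ∈ V`. -/
def Cluster (N : ℕ) (V : Finset (List ℕ)) (W : List ℕ → ℝ) (v : List ℕ) : Set Pt :=
  {x | ∃ u, IsLeaf V u ∧ v <+: u ∧ x = pt (Psi N W u) (W u)}

/-- The average `(∂₂G)_S` of the vertical derivative of `G` over `S`. -/
def d2avg (S : Set Pt) (G : Pt → ℝ) : ℝ :=
  ⨍ x in S, fderiv ℝ G x (EuclideanSpace.single 1 1)

end

/-! Descending one edge from `q` to `q ++ [a]` raises `Ψ` by `W q · a/(N-1) ≤ W q` and lowers the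
weight by at least `(1 - ε) W q`, so `(1 - ε)(Ψ v - Ψ p) + W v ≤ W p` for every descendant `v` of
`p`. Taking `p` to be the root gives `0 ≤ Ψ < 2` and `W ≤ 1` on `V`.

Two distinct leaves branch at some vertex `p` into children `p ++ [a]` and `p ++ [b]` with `a < b`.
Everything below `p ++ [b]` lies at least `W p / (N - 1)` to the right of `Ψ (p ++ [a])`, while the
subtree below `p ++ [a]` spreads over at most `ε W p / (1 - ε)`; when `εN ≤ 1` the gap left over is
at least the weight of the left leaf, hence at least `Δ`. The points of `E₁` lie on a `Δ`-grid of
the horizontal axis, at height at least `Δ` below every point of `E₂`. So `k₀ = 1` works. -/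

theorem List.exists_append_cons_of_not_prefix {α : Type*} :
    ∀ {u v : List α}, ¬ u <+: v → ¬ v <+: u →
      ∃ p a b s t, a ≠ b ∧ u = p ++ a :: s ∧ v = p ++ b :: t
  | [], _, hu, _ => absurd List.nil_prefix hu
  | _, [], _, hv => absurd List.nil_prefix hv
  | a :: u, b :: v, huv, hvu => by
    by_cases hab : a = b
    · subst hab
      obtain ⟨p, c, d, s, t, hcd, rfl, rfl⟩ :=
        exists_append_cons_of_not_prefix (by simpa using huv) (by simpa using hvu)
      exact ⟨a :: p, c, d, s, t, hcd, rfl, rfl⟩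
    · exact ⟨[], a, b, u, v, hab, rfl, rfl⟩

section Tree

variable {N : ℕ} {V : Finset (List ℕ)} {W : List ℕ → ℝ} {ε : ℝ}

theorem IsNaryTree.mem_of_prefix (tree : IsNaryTree N V) {u v : List ℕ} (hv : v ∈ V)
    (huv : u <+: v) : u ∈ V :=
  tree.2.1 v hv u huv

theorem IsNaryTree.lt_of_mem (tree : IsNaryTree N V) {v : List ℕ} (hv : v ∈ V) {a : ℕ}
    (ha : a ∈ v) : a < N :=
  tree.2.2.1 v hv a ha

theorem IsLeaf.eq_of_prefix (tree : IsNaryTree N V) {u v : List ℕ} (hu : IsLeaf V u)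
    (hv : v ∈ V) (huv : u <+: v) : u = v := by
  obtain ⟨_ | ⟨b, s⟩, rfl⟩ := huv
  · exact (List.append_nil u).symm
  · exact absurd (tree.mem_of_prefix hv ⟨s, by simp⟩) (hu.2 b)

theorem W_append_singleton_le (rd : RadiallyDecaying V W ε) {q : List ℕ} {a : ℕ}
    (hqa : q ++ [a] ∈ V) : W (q ++ [a]) ≤ ε * W q := by
  simpa using rd.2.2 _ hqa (by simp)

theorem Psi_nil : Psi N W [] = 0 := by
  simp [Psi]

theorem Psi_append_singleton (p : List ℕ) (a : ℕ) :
    Psi N W (p ++ [a]) = Psi N W p + W p * a / ((N : ℝ) - 1) := by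
  rw [Psi, List.length_append, List.length_singleton, Finset.sum_range_succ, List.take_left' rfl,
    List.getD_append_right _ _ _ _ le_rfl, Nat.sub_self, List.getD_cons_zero, Psi]
  congr 1
  refine Finset.sum_congr rfl fun i hi => ?_
  have hi : i < p.length := Finset.mem_range.1 hi
  rw [List.take_append_of_le_length hi.le, List.getD_append _ _ _ _ hi]

theorem IsNaryTree.mul_div_sub_one_le (tree : IsNaryTree N V) (hN : 2 ≤ N) {q : List ℕ}
    {a : ℕ} (hqa : q ++ [a] ∈ V) {w : ℝ} (hw : 0 ≤ w) : w * a / ((N : ℝ) - 1) ≤ w := by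
  have ha : (a : ℝ) + 1 ≤ N := by exact_mod_cast tree.lt_of_mem hqa (by simp)
  have hN' : (2 : ℝ) ≤ N := by exact_mod_cast hN
  rw [div_le_iff₀ (by linarith)]
  nlinarith

theorem Psi_le_Psi_append (hN : 1 ≤ N) (tree : IsNaryTree N V) (hW : ∀ v ∈ V, 0 < W v)
    (p s : List ℕ) (hps : p ++ s ∈ V) : Psi N W p ≤ Psi N W (p ++ s) := by
  induction s using List.reverseRecOn with
  | nil => simp
  | append_singleton s a ih =>
    rw [← List.append_assoc] at hps ⊢
    have hq : p ++ s ∈ V := tree.mem_of_prefix hps (List.prefix_append _ _)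
    have hN : (0 : ℝ) ≤ N - 1 := sub_nonneg.2 (by exact_mod_cast hN)
    have hstep : 0 ≤ W (p ++ s) * a / ((N : ℝ) - 1) := by
      have := hW _ hq
      positivity
    rw [Psi_append_singleton]
    linarith [ih hq]

theorem one_sub_mul_Psi_append_sub_add_le (hN : 2 ≤ N) (tree : IsNaryTree N V)
    (rd : RadiallyDecaying V W ε) (hε : ε ≤ 1) (p s : List ℕ) (hps : p ++ s ∈ V) :
    (1 - ε) * (Psi N W (p ++ s) - Psi N W p) + W (p ++ s) ≤ W p := by
  induction s using List.reverseRecOn with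
  | nil => simp
  | append_singleton s a ih =>
    rw [← List.append_assoc] at hps ⊢
    have hq : p ++ s ∈ V := tree.mem_of_prefix hps (List.prefix_append _ _)
    have hstep := tree.mul_div_sub_one_le hN hps (rd.2.1 _ hq).le
    have hdecay := W_append_singleton_le rd hps
    have := ih hq
    rw [Psi_append_singleton]
    nlinarith

theorem W_append_le (hN : 2 ≤ N) (tree : IsNaryTree N V) (rd : RadiallyDecaying V W ε)
    (hε : ε ≤ 1) (p s : List ℕ) (hps : p ++ s ∈ V) : W (p ++ s) ≤ W p := by
  have := one_sub_mul_Psi_append_sub_add_le hN tree rd hε p s hps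
  have := Psi_le_Psi_append (by omega) tree rd.2.1 p s hps
  nlinarith

theorem W_le_one (hN : 2 ≤ N) (tree : IsNaryTree N V) (rd : RadiallyDecaying V W ε)
    (hε : ε ≤ 1) {v : List ℕ} (hv : v ∈ V) : W v ≤ 1 :=
  rd.1 ▸ W_append_le hN tree rd hε [] v hv

theorem Psi_nonneg (hN : 2 ≤ N) (tree : IsNaryTree N V) (rd : RadiallyDecaying V W ε)
    {v : List ℕ} (hv : v ∈ V) : 0 ≤ Psi N W v :=
  Psi_nil (N := N) (W := W) ▸ Psi_le_Psi_append (by omega) tree rd.2.1 [] v hv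

theorem Psi_lt_two (hN : 2 ≤ N) (tree : IsNaryTree N V) (rd : RadiallyDecaying V W ε)
    (hε : ε ≤ 1 / 2) {v : List ℕ} (hv : v ∈ V) : Psi N W v < 2 := by
  have h := one_sub_mul_Psi_append_sub_add_le hN tree rd (by linarith) [] v hv
  rw [List.nil_append, Psi_nil, sub_zero, rd.1] at h
  nlinarith [Psi_nonneg hN tree rd hv, rd.2.1 v hv]

theorem W_le_Psi_sub_Psi_of_lt (hN : 2 ≤ N) (tree : IsNaryTree N V)
    (rd : RadiallyDecaying V W ε) (hε : 0 < ε) (hεN : ε * N ≤ 1) {p s t : List ℕ} {a b : ℕ}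
    (hab : a < b) (hu : p ++ a :: s ∈ V) (hv : p ++ b :: t ∈ V) :
    W (p ++ a :: s) ≤ Psi N W (p ++ b :: t) - Psi N W (p ++ a :: s) := by
  have hN' : (2 : ℝ) ≤ N := by exact_mod_cast hN
  have hab' : (a : ℝ) + 1 ≤ b := by exact_mod_cast hab
  have h1ε : 0 < 1 - ε := by nlinarith
  rw [List.append_cons p a s] at hu ⊢
  rw [List.append_cons p b t] at hv ⊢
  have hp : 0 < W p := rd.2.1 p (tree.mem_of_prefix hu (by simp))
  have hWu := rd.2.1 _ hu
  have hleft := one_sub_mul_Psi_append_sub_add_le hN tree rd (by linarith) _ s hu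
  have hright := Psi_le_Psi_append (by omega) tree rd.2.1 _ t hv
  have hdecay := W_append_singleton_le rd (tree.mem_of_prefix hu (List.prefix_append _ _))
  rw [Psi_append_singleton] at hleft hright
  set c := W p / ((N : ℝ) - 1) with hc
  have hc0 : 0 < c := div_pos hp (by linarith)
  have hWp : W p = c * ((N : ℝ) - 1) := by rw [hc, div_mul_cancel₀ _ (by linarith)]
  simp only [mul_div_right_comm (W p), ← hc] at hleft hright
  rw [hWp] at hdecay
  -- `(1 - ε)(Ψ v - Ψ u - W u) ≥ (1 - ε) c (b - a - 1) + c (1 - εN) + ε W u`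
  have hgap : 0 ≤ (1 - ε) *
      (Psi N W (p ++ [b] ++ t) - Psi N W (p ++ [a] ++ s) - W (p ++ [a] ++ s)) := by
    nlinarith [mul_le_mul_of_nonneg_left hright h1ε.le, mul_nonneg hc0.le (sub_nonneg.2 hεN),
      mul_nonneg (mul_nonneg hc0.le (sub_nonneg.2 hab')) h1ε.le, mul_pos hε hWu]
  linarith [nonneg_of_mul_nonneg_right hgap h1ε]

end Tree

section SeparatedSet

variable {N : ℕ} {V : Finset (List ℕ)} {W : List ℕ → ℝ} {ε : ℝ}

theorem Delta_le {u : List ℕ} (hu : IsLeaf V u) : Delta V W ≤ W u := by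
  refine csInf_le ((V.finite_toSet.image W).subset ?_).bddBelow ⟨u, hu, rfl⟩
  rintro _ ⟨v, hv, rfl⟩
  exact ⟨v, hv.1, rfl⟩

theorem Delta_nonneg (rd : RadiallyDecaying V W ε) : 0 ≤ Delta V W :=
  Real.sInf_nonneg fun _ ⟨v, hv, hw⟩ => hw ▸ (rd.2.1 v hv.1).le

theorem Delta_le_abs_Psi_sub_Psi (hN : 2 ≤ N) (tree : IsNaryTree N V)
    (rd : RadiallyDecaying V W ε) (hε : 0 < ε) (hεN : ε * N ≤ 1) {u v : List ℕ}
    (hu : IsLeaf V u) (hv : IsLeaf V v) (huv : u ≠ v) :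
    Delta V W ≤ |Psi N W u - Psi N W v| := by
  obtain ⟨p, a, b, s, t, hab, rfl, rfl⟩ := List.exists_append_cons_of_not_prefix
    (fun h => huv (hu.eq_of_prefix tree hv.1 h)) (fun h => huv (hv.eq_of_prefix tree hu.1 h).symm)
  rcases hab.lt_or_gt with hab | hab
  · rw [abs_sub_comm]
    exact (Delta_le hu).trans
      ((W_le_Psi_sub_Psi_of_lt hN tree rd hε hεN hab hu.1 hv.1).trans (le_abs_self _))
  · exact (Delta_le hv).trans
      ((W_le_Psi_sub_Psi_of_lt hN tree rd hε hεN hab hv.1 hu.1).trans (le_abs_self _))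

theorem abs_sub_le_dist (x y : Pt) (i : Fin 2) : |x i - y i| ≤ dist x y := by
  simpa [Real.dist_eq] using PiLp.dist_apply_le x y i

@[simp] theorem pt_zero (a b : ℝ) : pt a b 0 = a := by simp [pt]

@[simp] theorem pt_one (a b : ℝ) : pt a b 1 = b := by simp [pt]

theorem le_dist_of_mem_E1set {Δ : ℝ} (hΔ : 0 ≤ Δ) {x y : Pt} (hx : x ∈ E1set Δ)
    (hy : y ∈ E1set Δ) (hxy : x ≠ y) : Δ ≤ dist x y := by
  obtain ⟨⟨n, hn⟩, -, hx1⟩ := hx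
  obtain ⟨⟨m, hm⟩, -, hy1⟩ := hy
  have hnm : n ≠ m := by
    rintro rfl
    exact hxy (PiLp.ext (Fin.forall_fin_two.2 ⟨hn.trans hm.symm, hx1.trans hy1.symm⟩))
  have h1 : (1 : ℝ) ≤ |(n : ℝ) - m| := by exact_mod_cast Int.one_le_abs (sub_ne_zero.2 hnm)
  calc Δ ≤ |(n : ℝ) - m| * Δ := le_mul_of_one_le_left hΔ h1
    _ = |x 0 - y 0| := by rw [hn, hm, ← sub_mul, abs_mul, abs_of_nonneg hΔ]
    _ ≤ dist x y := abs_sub_le_dist x y 0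

theorem Delta_le_dist_of_mem_E1set_of_mem_E2set (rd : RadiallyDecaying V W ε) {x y : Pt}
    (hx : x ∈ E1set (Delta V W)) (hy : y ∈ E2set N V W) : Delta V W ≤ dist x y := by
  obtain ⟨-, -, hx1⟩ := hx
  obtain ⟨v, hv, rfl⟩ := hy
  calc Delta V W ≤ |x 1 - pt (Psi N W v) (W v) 1| := by
        rw [hx1, pt_one, zero_sub, abs_neg, abs_of_pos (rd.2.1 v hv.1)]
        exact Delta_le hv
    _ ≤ dist x _ := abs_sub_le_dist _ _ 1

theorem mem_Ico_of_mem_Eset (hN : 2 ≤ N) (tree : IsNaryTree N V) (rd : RadiallyDecaying V W ε)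
    (hε : ε ≤ 1 / 2) {x : Pt} (hx : x ∈ Eset N V W) :
    x 0 ∈ Ico (0 : ℝ) 2 ∧ x 1 ∈ Ico (0 : ℝ) 2 := by
  rcases hx with ⟨-, hx0, hx1⟩ | ⟨v, hv, rfl⟩
  · exact ⟨hx0, by norm_num [hx1]⟩
  · rw [pt_zero, pt_one]
    exact ⟨⟨Psi_nonneg hN tree rd hv.1, Psi_lt_two hN tree rd hε hv.1⟩,
      ⟨(rd.2.1 v hv.1).le, (W_le_one hN tree rd (by linarith) hv.1).trans_lt one_lt_two⟩⟩

theorem Delta_le_dist_of_mem_Eset (hN : 2 ≤ N) (tree : IsNaryTree N V)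
    (rd : RadiallyDecaying V W ε) (hε : 0 < ε) (hεN : ε * N ≤ 1) {x y : Pt}
    (hx : x ∈ Eset N V W) (hy : y ∈ Eset N V W) (hxy : x ≠ y) : Delta V W ≤ dist x y := by
  rcases hx with hx | hx <;> rcases hy with hy | hy
  · exact le_dist_of_mem_E1set (Delta_nonneg rd) hx hy hxy
  · exact Delta_le_dist_of_mem_E1set_of_mem_E2set rd hx hy
  · exact dist_comm x y ▸ Delta_le_dist_of_mem_E1set_of_mem_E2set rd hy hx
  · obtain ⟨u, hu, rfl⟩ := hx
    obtain ⟨v, hv, rfl⟩ := hy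
    have huv : u ≠ v := by
      rintro rfl
      exact hxy rfl
    calc Delta V W ≤ |Psi N W u - Psi N W v| :=
          Delta_le_abs_Psi_sub_Psi hN tree rd hε hεN hu hv huv
      _ = |pt (Psi N W u) (W u) 0 - pt (Psi N W v) (W v) 0| := by rw [pt_zero, pt_zero]
      _ ≤ dist _ _ := abs_sub_le_dist _ _ 0

end SeparatedSet

/-- parts 1 and 2 of Lemma 3 of the paper: `E ⊂ [0,2) × [0,2)` and
`E` is `Δ`-separated. -/
theorem statement4 :
    ∃ k₀ : ℝ, 0 < k₀ ∧
      ∀ (N : ℕ) (V : Finset (List ℕ)) (W : List ℕ → ℝ) (ε : ℝ),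
        TreeHyp k₀ N V W ε → DepthAtLeastOne V →
          (∀ x ∈ Eset N V W, x 0 ∈ Ico (0 : ℝ) 2 ∧ x 1 ∈ Ico (0 : ℝ) 2) ∧
          (∀ x ∈ Eset N V W, ∀ y ∈ Eset N V W, x ≠ y → Delta V W ≤ dist x y) := by
  refine ⟨1, one_pos, fun N V W ε ⟨hN, tree, hε, hεk, rd⟩ _ => ?_⟩
  have hN' : (2 : ℝ) ≤ N := by exact_mod_cast hN
  have hεN : ε * N ≤ 1 := (le_div_iff₀ (by linarith)).1 hεk
  have hε2 : ε ≤ 1 / 2 := by nlinarith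
  exact ⟨fun x hx => mem_Ico_of_mem_Eset hN tree rd hε2 hx,
    fun x hx y hy hxy => Delta_le_dist_of_mem_Eset hN tree rd hε hεN hx hy hxy⟩
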